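/- Let V be a 3-dimensional real inner product space with orthonormal basis (e₁, e₂, e₃), let ξ ∈ V be a unit vector, and let η(X) = ⟪X, ξ⟫. Let S : V × V → ℝ be a symmetric bilinear form with S(Y, ξ) = -2·η(Y) for all Y, and let R : V × V × V → V be a trilinear map such that S(Y,Z) = Σᵢ ⟪R(Y, eᵢ)eᵢ, Z⟫ for all Y, Z. Suppose that for all Y, V', W, Z ∈ V: ⟪R(Y,V')W, Z⟫ + ⟪V',W⟫⟪Y,Z⟫ + ⟪Y,W⟫⟪V',Z⟫ + S(Y,W)⟪V',Z⟫ - S(Y,V')η(W)η(Z) - S(Y,W)η(V')η(Z) - 2⟪Y,V'⟫η(W)η(Z) - 2⟪Y,W⟫η(V')η(Z) = 0. Then S(Y,Z) = -2⟪Y,Z⟫ for all Y, Z ∈ V. -/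
import Mathlib


open scoped RealInnerProductSpace

theorem stmt_7 {V : Type*} [NormedAddCommGroup V] [InnerProductSpace ℝ V]
    (hdim : Module.finrank ℝ V = 3)
    (e : OrthonormalBasis (Fin 3) ℝ V)
    (ξ : V) (hξ : ‖ξ‖ = 1)
    (η : V → ℝ) (hη : ∀ X, η X = ⟪X, ξ⟫)
    (S : V →ₗ[ℝ] V →ₗ[ℝ] ℝ) (hSsymm : ∀ X Y : V, S X Y = S Y X)
    (hSξ : ∀ Y : V, S Y ξ = -2 * η Y)
    (R : V →ₗ[ℝ] V →ₗ[ℝ] V →ₗ[ℝ] V)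
    (hRS : ∀ Y Z : V, S Y Z = ∑ i : Fin 3, ⟪R Y (e i) (e i), Z⟫)
    (h : ∀ Y V' W Z : V,
      ⟪R Y V' W, Z⟫ + ⟪V', W⟫ * ⟪Y, Z⟫ + ⟪Y, W⟫ * ⟪V', Z⟫
        + S Y W * ⟪V', Z⟫ - S Y V' * (η W * η Z) - S Y W * (η V' * η Z)
        - 2 * ⟪Y, V'⟫ * (η W * η Z) - 2 * ⟪Y, W⟫ * (η V' * η Z) = 0) :
    ∀ Y Z : V, S Y Z = -2 * ⟪Y, Z⟫ := by
  intro Y Z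
  -- general fact: for a linear functional f, ∑ f(eᵢ) ⟪eᵢ, x⟫ = f x
  have key : ∀ (f : V →ₗ[ℝ] ℝ) (x : V), ∑ i : Fin 3, f (e i) * ⟪e i, x⟫ = f x := by
    intro f x
    conv_rhs => rw [← e.sum_repr' x, map_sum]
    refine Finset.sum_congr rfl fun i _ => ?_
    rw [map_smul, smul_eq_mul, mul_comm]
  have h0 : ∑ i : Fin 3,
      (⟪R Y (e i) (e i), Z⟫ + ⟪e i, e i⟫ * ⟪Y, Z⟫ + ⟪Y, e i⟫ * ⟪e i, Z⟫
        + S Y (e i) * ⟪e i, Z⟫ - S Y (e i) * (η (e i) * η Z)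
        - S Y (e i) * (η (e i) * η Z)
        - 2 * ⟪Y, e i⟫ * (η (e i) * η Z) - 2 * ⟪Y, e i⟫ * (η (e i) * η Z)) = 0 :=
    Finset.sum_eq_zero fun i _ => h Y (e i) (e i) Z
  have hee : ∀ i : Fin 3, ⟪e i, e i⟫ = (1 : ℝ) := by
    intro i
    rw [real_inner_self_eq_norm_sq, e.orthonormal.1 i, one_pow]
  have hsum1 : ∑ i : Fin 3, ⟪R Y (e i) (e i), Z⟫ = S Y Z := (hRS Y Z).symm
  have hsum2 : ∑ i : Fin 3, ⟪e i, e i⟫ * ⟪Y, Z⟫ = 3 * ⟪Y, Z⟫ := by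
    simp [hee, Fin.sum_univ_three]
  have hsum3 : ∑ i : Fin 3, ⟪Y, e i⟫ * ⟪e i, Z⟫ = ⟪Y, Z⟫ :=
    e.sum_inner_mul_inner Y Z
  have hsum4 : ∑ i : Fin 3, S Y (e i) * ⟪e i, Z⟫ = S Y Z := key (S Y) Z
  have hsum5 : ∑ i : Fin 3, S Y (e i) * (η (e i) * η Z) = -2 * η Y * η Z := by
    have : ∑ i : Fin 3, S Y (e i) * η (e i) = S Y ξ := by
      simpa [hη] using key (S Y) ξ
    calc ∑ i : Fin 3, S Y (e i) * (η (e i) * η Z)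
        = (∑ i : Fin 3, S Y (e i) * η (e i)) * η Z := by
          rw [Finset.sum_mul]; exact Finset.sum_congr rfl fun i _ => by ring
      _ = -2 * η Y * η Z := by rw [this, hSξ]
  have hsum6 : ∑ i : Fin 3, 2 * ⟪Y, e i⟫ * (η (e i) * η Z) = 2 * η Y * η Z := by
    have : ∑ i : Fin 3, ⟪Y, e i⟫ * η (e i) = η Y := by
      simpa [hη] using e.sum_inner_mul_inner Y ξ
    calc ∑ i : Fin 3, 2 * ⟪Y, e i⟫ * (η (e i) * η Z)
        = (∑ i : Fin 3, ⟪Y, e i⟫ * η (e i)) * (2 * η Z) := by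
          rw [Finset.sum_mul]; exact Finset.sum_congr rfl fun i _ => by ring
      _ = 2 * η Y * η Z := by rw [this]; ring
  rw [show ∀ (a b c d f g p q : Fin 3 → ℝ),
      (∑ i, (a i + b i + c i + d i - f i - g i - p i - q i)) =
      (∑ i, a i) + (∑ i, b i) + (∑ i, c i) + (∑ i, d i) - (∑ i, f i)
        - (∑ i, g i) - (∑ i, p i) - (∑ i, q i) from fun a b c d f g p q => by
      simp [Finset.sum_add_distrib, Finset.sum_sub_distrib]] at h0
  rw [hsum1, hsum2, hsum3, hsum4, hsum5, hsum6] at h0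
  linarith
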